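/- Let W = (X, Y) with regression function γ_0(x) = E[Y | X = x], let m(W, γ) be linear in γ with Riesz representer α_0 satisfying E[m(W, γ)] = E[α_0(X)γ(X)] for all γ in the relevant class, and define θ_0 = E[m(W, γ_0)]. Then the Neyman orthogonal score ψ(W; α, γ, θ) = α(X)(Y − γ(X)) + m(W, γ) − θ satisfies: (i) E[ψ(W; α_0, γ_0, θ_0)] = 0; (ii) the Gateaux derivative of η ↦ E[ψ(W; α_0 + s(α − α_0), γ_0 + s(γ − γ_0), θ_0)] at s = 0 is zero for any (α, γ) with appropriate integrability, i.e., the score is Neyman orthogonal. -/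
import Mathlib


open MeasureTheory

/-- Neyman orthogonality of the debiased-machine-learning score
`ψ(W; α, γ, θ) = α(X)(Y − γ(X)) + m(W, γ) − θ`:
(i) it is mean zero at the truth `(α₀, γ₀, θ₀)` with `θ₀ = E[m(W, γ₀)]`;
(ii) its Gateaux derivative in the nuisance direction `(α − α₀, γ − γ₀)` at the
truth vanishes.  Here `γ₀` is the regression function (characterized by the
orthogonality of residuals to functions of `X`), and `α₀` is the Riesz
representer of the linear functional `γ ↦ E[m(W, γ)]`. -/
theorem stmt8 {Ω 𝓧 : Type*} [MeasurableSpace Ω] (P : Measure Ω)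
    [IsProbabilityMeasure P]
    (X : Ω → 𝓧) (Y : Ω → ℝ)
    (m : Ω → (𝓧 → ℝ) → ℝ) (α0 γ0 α γ : 𝓧 → ℝ)
    -- `γ₀` is the regression function: residuals are orthogonal to any
    -- integrable function of `X`
    (hreg : ∀ h : 𝓧 → ℝ, Integrable (fun ω => (Y ω - γ0 (X ω)) * h (X ω)) P →
      ∫ ω, (Y ω - γ0 (X ω)) * h (X ω) ∂P = 0)
    -- `α₀` is a Riesz representer on the relevant class
    (hriesz0 : ∫ ω, m ω γ0 ∂P = ∫ ω, α0 (X ω) * γ0 (X ω) ∂P)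
    (hriesz : ∫ ω, m ω (fun x => γ x - γ0 x) ∂P
      = ∫ ω, α0 (X ω) * (γ (X ω) - γ0 (X ω)) ∂P)
    -- `m` is linear in `γ` along the path
    (hmlin : ∀ ω (s : ℝ), m ω (fun x => γ0 x + s * (γ x - γ0 x))
      = m ω γ0 + s * m ω (fun x => γ x - γ0 x))
    -- integrability of all the pieces
    (h1 : Integrable (fun ω => α0 (X ω) * (Y ω - γ0 (X ω))) P)
    (h2 : Integrable (fun ω => (α (X ω) - α0 (X ω)) * (Y ω - γ0 (X ω))) P)
    (h3 : Integrable (fun ω => α0 (X ω) * (γ (X ω) - γ0 (X ω))) P)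
    (h4 : Integrable (fun ω => (α (X ω) - α0 (X ω)) * (γ (X ω) - γ0 (X ω))) P)
    (h5 : Integrable (fun ω => m ω γ0) P)
    (h6 : Integrable (fun ω => m ω (fun x => γ x - γ0 x)) P)
    (θ0 : ℝ) (hθ0 : θ0 = ∫ ω, m ω γ0 ∂P) :
    -- (i) mean zero at the truth
    (∫ ω, (α0 (X ω) * (Y ω - γ0 (X ω)) + m ω γ0 - θ0) ∂P = 0)
    -- (ii) Neyman orthogonality: zero Gateaux derivative at `s = 0`
    ∧ HasDerivAt (fun s : ℝ =>
        ∫ ω, ((α0 (X ω) + s * (α (X ω) - α0 (X ω)))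
              * (Y ω - (γ0 (X ω) + s * (γ (X ω) - γ0 (X ω))))
            + m ω (fun x => γ0 x + s * (γ x - γ0 x)) - θ0) ∂P) 0 0 := by

  -- abbreviations via facts
  have hAR : ∫ ω, α0 (X ω) * (Y ω - γ0 (X ω)) ∂P = 0 := by
    have h1' : Integrable (fun ω => (Y ω - γ0 (X ω)) * α0 (X ω)) P := by
      simpa [mul_comm] using h1
    have := hreg α0 h1'
    calc ∫ ω, α0 (X ω) * (Y ω - γ0 (X ω)) ∂P
        = ∫ ω, (Y ω - γ0 (X ω)) * α0 (X ω) ∂P := by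
          congr 1; funext ω; ring
      _ = 0 := this
  have hBR : ∫ ω, (α (X ω) - α0 (X ω)) * (Y ω - γ0 (X ω)) ∂P = 0 := by
    have h2' : Integrable (fun ω => (Y ω - γ0 (X ω)) * (α (X ω) - α0 (X ω))) P := by
      simpa [mul_comm] using h2
    have := hreg (fun x => α x - α0 x) h2'
    calc ∫ ω, (α (X ω) - α0 (X ω)) * (Y ω - γ0 (X ω)) ∂P
        = ∫ ω, (Y ω - γ0 (X ω)) * (α (X ω) - α0 (X ω)) ∂P := by
          congr 1; funext ω; ring
      _ = 0 := this
  have hi : ∫ ω, (α0 (X ω) * (Y ω - γ0 (X ω)) + m ω γ0 - θ0) ∂P = 0 := by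
    have hsum : Integrable (fun ω => α0 (X ω) * (Y ω - γ0 (X ω)) + m ω γ0) P := h1.add h5
    rw [integral_sub hsum (integrable_const θ0),
        integral_add h1 h5, hAR, integral_const]
    simp [hθ0]
  refine ⟨hi, ?_⟩
  set c : ℝ := -∫ ω, (α (X ω) - α0 (X ω)) * (γ (X ω) - γ0 (X ω)) ∂P with hc
  have key : (fun s : ℝ =>
        ∫ ω, ((α0 (X ω) + s * (α (X ω) - α0 (X ω)))
              * (Y ω - (γ0 (X ω) + s * (γ (X ω) - γ0 (X ω))))
            + m ω (fun x => γ0 x + s * (γ x - γ0 x)) - θ0) ∂P)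
      = fun s : ℝ => c * s ^ 2 := by
    funext s
    have heq : (fun ω => (α0 (X ω) + s * (α (X ω) - α0 (X ω)))
              * (Y ω - (γ0 (X ω) + s * (γ (X ω) - γ0 (X ω))))
            + m ω (fun x => γ0 x + s * (γ x - γ0 x)) - θ0)
        = fun ω => (α0 (X ω) * (Y ω - γ0 (X ω)) + m ω γ0 - θ0)
            + (s * ((α (X ω) - α0 (X ω)) * (Y ω - γ0 (X ω))
                - α0 (X ω) * (γ (X ω) - γ0 (X ω))
                + m ω (fun x => γ x - γ0 x))
              + s ^ 2 * (-((α (X ω) - α0 (X ω)) * (γ (X ω) - γ0 (X ω))))) := by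
      funext ω; rw [hmlin ω s]; ring
    rw [heq]
    have hg1 : Integrable (fun ω => α0 (X ω) * (Y ω - γ0 (X ω)) + m ω γ0 - θ0) P :=
      (h1.add h5).sub (integrable_const θ0)
    have hsub : Integrable (fun ω => (α (X ω) - α0 (X ω)) * (Y ω - γ0 (X ω))
        - α0 (X ω) * (γ (X ω) - γ0 (X ω))) P := h2.sub h3
    have hg2a : Integrable (fun ω => (α (X ω) - α0 (X ω)) * (Y ω - γ0 (X ω))
        - α0 (X ω) * (γ (X ω) - γ0 (X ω)) + m ω (fun x => γ x - γ0 x)) P :=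
      hsub.add h6
    have hneg : Integrable (fun ω => -((α (X ω) - α0 (X ω)) * (γ (X ω) - γ0 (X ω)))) P := h4.neg
    have hg2 : Integrable (fun ω => s * ((α (X ω) - α0 (X ω)) * (Y ω - γ0 (X ω))
        - α0 (X ω) * (γ (X ω) - γ0 (X ω)) + m ω (fun x => γ x - γ0 x))
        + s ^ 2 * (-((α (X ω) - α0 (X ω)) * (γ (X ω) - γ0 (X ω))))) P :=
      (hg2a.const_mul s).add (hneg.const_mul (s ^ 2))
    rw [integral_add hg1 hg2, hi, integral_add (hg2a.const_mul s) (hneg.const_mul (s ^ 2)),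
        integral_const_mul, integral_const_mul,
        integral_add hsub h6, integral_sub h2 h3, hBR, hriesz, integral_neg]
    ring
  rw [key]
  have : HasDerivAt (fun s : ℝ => c * s ^ 2) (c * (2 * 0 ^ 1)) 0 :=
    (hasDerivAt_pow 2 (0 : ℝ)).const_mul c
  simpa using this
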